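/- There are no elements x, y, z of the field ℚ_29 of 29-adic numbers with (x, y, z) ≠ (0, 0, 0) such that 3x^7 + 4y^7 + 5z^7 = 0. -/

import Mathlib

/-!
Dividing a nonzero solution by its coordinate of largest absolute value gives a solution in
`ℤ_[p]` with one coordinate equal to `1`; reducing it modulo `p` gives a nontrivial zero of the
form over `ZMod p`. So a diagonal form with only the trivial zero modulo `p` has only the trivial
zero over `ℚ_[p]`. Modulo `29`, seventh powers are `0` or fourth roots of unity (as `7 ∣ 28`),
i.e. lie in `{0, ±1, ±12}`, and among these `3 r + 4 s + 5 t = 0` only for `r = s = t = 0`.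
-/

instance : Fact (Nat.Prime 29) := ⟨by norm_num⟩

namespace PadicInt

variable {p : ℕ} [Fact p.Prime]

theorem norm_lt_one_of_toZMod_eq_zero {x : ℤ_[p]} (hx : toZMod x = 0) : ‖x‖ < 1 := by
  have hmem : x ∈ IsLocalRing.maximalIdeal ℤ_[p] := ker_toZMod (p := p) ▸ RingHom.mem_ker.mpr hx
  exact mem_nonunits.mp hmem

theorem norm_lt_one_of_diagonal_eq_zero {n : ℕ} {a b c : ℤ}
    (hmod : ∀ u v w : ZMod p, a * u ^ n + b * v ^ n + c * w ^ n = 0 → u = 0 ∧ v = 0 ∧ w = 0)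
    {x y z : ℤ_[p]} (h : a * x ^ n + b * y ^ n + c * z ^ n = 0) :
    ‖x‖ < 1 ∧ ‖y‖ < 1 ∧ ‖z‖ < 1 := by
  obtain ⟨hx, hy, hz⟩ := hmod (toZMod x) (toZMod y) (toZMod z) (by simpa using congrArg toZMod h)
  exact ⟨norm_lt_one_of_toZMod_eq_zero hx, norm_lt_one_of_toZMod_eq_zero hy,
    norm_lt_one_of_toZMod_eq_zero hz⟩

end PadicInt

namespace Padic

variable {p : ℕ} [Fact p.Prime]

theorem exists_coe_eq_inv_mul_of_norm_le {v w : ℚ_[p]} (hv : ‖v‖ ≤ ‖w‖) :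
    ∃ V : ℤ_[p], (V : ℚ_[p]) = w⁻¹ * v :=
  ⟨⟨w⁻¹ * v, by rw [norm_mul, norm_inv]; exact inv_mul_le_one_of_le₀ hv (norm_nonneg w)⟩, rfl⟩

theorem eq_zero_of_diagonal_eq_zero {n : ℕ} {a b c : ℤ}
    (hmod : ∀ u v w : ZMod p, a * u ^ n + b * v ^ n + c * w ^ n = 0 → u = 0 ∧ v = 0 ∧ w = 0)
    {x y z : ℚ_[p]} (h : a * x ^ n + b * y ^ n + c * z ^ n = 0) :
    x = 0 ∧ y = 0 ∧ z = 0 := by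
  classical
  by_contra hne
  obtain ⟨w, hw, hxw, hyw, hzw⟩ : ∃ w, (w = x ∨ w = y ∨ w = z) ∧
      ‖x‖ ≤ ‖w‖ ∧ ‖y‖ ≤ ‖w‖ ∧ ‖z‖ ≤ ‖w‖ := by
    simpa using Finset.exists_max_image {x, y, z} (‖·‖) (Finset.insert_nonempty _ _)
  have hw0 : w ≠ 0 := by
    rintro rfl
    simp only [norm_zero, norm_le_zero_iff] at hxw hyw hzw
    exact hne ⟨hxw, hyw, hzw⟩
  obtain ⟨X, hX⟩ := exists_coe_eq_inv_mul_of_norm_le hxw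
  obtain ⟨Y, hY⟩ := exists_coe_eq_inv_mul_of_norm_le hyw
  obtain ⟨Z, hZ⟩ := exists_coe_eq_inv_mul_of_norm_le hzw
  have hXYZ : a * X ^ n + b * Y ^ n + c * Z ^ n = 0 :=
    PadicInt.ext (by push_cast [hX, hY, hZ]; linear_combination w⁻¹ ^ n * h)
  obtain ⟨hX1, hY1, hZ1⟩ := PadicInt.norm_lt_one_of_diagonal_eq_zero hmod hXYZ
  have hww : ‖w⁻¹ * w‖ < 1 := by
    rcases hw with rfl | rfl | rfl
    · rwa [← hX, PadicInt.padic_norm_e_of_padicInt]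
    · rwa [← hY, PadicInt.padic_norm_e_of_padicInt]
    · rwa [← hZ, PadicInt.padic_norm_e_of_padicInt]
  simp [hw0] at hww

end Padic

namespace ZMod

theorem pow_seven_mem_fourth_roots_of_unity_or_zero (u : ZMod 29) :
    u ^ 7 ∈ ({0, 1, -1, 12, -12} : Finset (ZMod 29)) := by
  revert u
  decide

theorem eq_zero_of_three_four_five_pow_seven_eq_zero {u v w : ZMod 29}
    (h : 3 * u ^ 7 + 4 * v ^ 7 + 5 * w ^ 7 = 0) : u = 0 ∧ v = 0 ∧ w = 0 := by
  have hcheck : ∀ r ∈ ({0, 1, -1, 12, -12} : Finset (ZMod 29)),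
      ∀ s ∈ ({0, 1, -1, 12, -12} : Finset (ZMod 29)),
      ∀ t ∈ ({0, 1, -1, 12, -12} : Finset (ZMod 29)),
      3 * r + 4 * s + 5 * t = 0 → r = 0 ∧ s = 0 ∧ t = 0 := by
    decide
  simpa using hcheck _ (pow_seven_mem_fourth_roots_of_unity_or_zero u)
    _ (pow_seven_mem_fourth_roots_of_unity_or_zero v)
    _ (pow_seven_mem_fourth_roots_of_unity_or_zero w) h

end ZMod

theorem no_Q29_points_3_4_5 :
    ¬ ∃ x y z : ℚ_[29], (x, y, z) ≠ (0, 0, 0) ∧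
      3 * x ^ 7 + 4 * y ^ 7 + 5 * z ^ 7 = 0 := by
  rintro ⟨x, y, z, hne, h⟩
  obtain ⟨rfl, rfl, rfl⟩ := Padic.eq_zero_of_diagonal_eq_zero (a := 3) (b := 4) (c := 5)
    (fun _ _ _ huvw => ZMod.eq_zero_of_three_four_five_pow_seven_eq_zero (by exact_mod_cast huvw))
    (by exact_mod_cast h)
  exact hne rfl
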